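/- Fix integers 0 < r' < J ≤ K and subsets S_1,...,S_J of a finite set S. Define T_r := ∅ for r ∈ [r'] and T_r := S^{(r'+1)}([r]) for r = r'+1,...,J, and let G_r := S_r ∪ T_r for r ∈ [J]. Then G^{(r)}([J]) = S^{(r)}([J]) for r = 1,...,r', and G^{(r)}([J]) = S^{(r'+1)}([J−r+r'+1]) for r = r'+1,...,J. -/
import Mathlib


open Finset

/-- `cutOp S U r` is `S^{(r)}(U) = ⋃_{U' ⊆ U, |U'| = r} ⋂_{k ∈ U'} S_k`. -/
def cutOp {α : Type*} [Fintype α] [DecidableEq α] (S : ℕ → Finset α) (U : Finset ℕ)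
    (r : ℕ) : Finset α :=
  (U.powersetCard r).sup fun V => V.inf S

lemma mem_cutOp {α : Type*} [Fintype α] [DecidableEq α] (S : ℕ → Finset α) (U : Finset ℕ)
    (r : ℕ) (x : α) :
    x ∈ cutOp S U r ↔ r ≤ (U.filter fun k => x ∈ S k).card := by
  unfold cutOp
  simp only [Finset.mem_sup, Finset.mem_powersetCard]
  constructor
  · rintro ⟨V, ⟨hVU, hVcard⟩, hx⟩
    rw [← hVcard]
    apply card_le_card
    intro k hk
    rw [mem_filter]
    exact ⟨hVU hk, (Finset.mem_inf.mp hx) k hk⟩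
  · intro h
    obtain ⟨V, hVsub, hVcard⟩ := Finset.exists_subset_card_eq h
    refine ⟨V, ⟨fun k hk => (mem_filter.mp (hVsub hk)).1, hVcard⟩, ?_⟩
    rw [Finset.mem_inf]
    exact fun k hk => (mem_filter.mp (hVsub hk)).2

theorem eq_AS {α : Type*} [Fintype α] [DecidableEq α] (K : ℕ) (S : ℕ → Finset α)
    (r' J : ℕ) (h0 : 0 < r') (h1 : r' < J) (h2 : J ≤ K)
    (T : ℕ → Finset α)
    (hT : ∀ r, T r = if r ≤ r' then ∅ else cutOp S (Finset.Icc 1 r) (r' + 1))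
    (G : ℕ → Finset α) (hG : ∀ r, G r = S r ∪ T r) :
    (∀ r, 1 ≤ r → r ≤ r' →
        cutOp G (Finset.Icc 1 J) r = cutOp S (Finset.Icc 1 J) r) ∧
    (∀ r, r' < r → r ≤ J →
        cutOp G (Finset.Icc 1 J) r = cutOp S (Finset.Icc 1 (J - r + r' + 1)) (r' + 1)) := by
  -- notation: a x n = #{k ∈ [1,n] : x ∈ S k}
  have amono : ∀ (x : α) {m n : ℕ}, m ≤ n →
      ((Icc 1 m).filter fun k => x ∈ S k).card ≤ ((Icc 1 n).filter fun k => x ∈ S k).card :=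
    fun x m n h => card_le_card (filter_subset_filter _ (Icc_subset_Icc le_rfl h))
  -- x ∈ T k ↔ ¬ k ≤ r' ∧ r'+1 ≤ a x k
  have hTmem : ∀ (x : α) (k : ℕ), x ∈ T k ↔
      r' < k ∧ r' + 1 ≤ ((Icc 1 k).filter fun j => x ∈ S j).card := by
    intro x k
    rw [hT k]
    split_ifs with h
    · simp; omega
    · rw [mem_cutOp]; constructor
      · exact fun hh => ⟨by omega, hh⟩
      · exact fun hh => hh.2
  have hGmem : ∀ (x : α) (k : ℕ), x ∈ G k ↔ x ∈ S k ∨ x ∈ T k := by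
    intro x k; rw [hG k, mem_union]
  constructor
  · intro r hr1 hr2
    ext x
    rw [mem_cutOp, mem_cutOp]
    constructor
    · intro hg
      by_contra hf
      push_neg at hf
      have heq : ((Icc 1 J).filter fun k => x ∈ G k) = ((Icc 1 J).filter fun k => x ∈ S k) := by
        apply filter_congr
        intro k hk
        simp only [mem_Icc] at hk
        rw [hGmem]
        constructor
        · rintro (h | h)
          · exact h
          · exfalso
            rw [hTmem] at h
            have := amono x hk.2 (m := k)
            omega
        · exact fun h => Or.inl h
      rw [heq] at hg; omega
    · intro hf
      refine le_trans hf (card_le_card ?_)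
      intro k hk
      rw [mem_filter] at hk ⊢
      exact ⟨hk.1, (hGmem x k).mpr (Or.inl hk.2)⟩
  · intro r hr1 hr2
    set m := J - r + r' + 1 with hm
    have hmJ : m ≤ J := by omega
    have hm1 : r' + 1 ≤ m := by omega
    ext x
    rw [mem_cutOp, mem_cutOp]
    constructor
    · intro hg
      by_contra hf
      push_neg at hf
      have ham : ((Icc 1 m).filter fun k => x ∈ S k).card ≤ r' := by omega
      -- bound g
      have hsplit : ((Icc 1 J).filter fun k => x ∈ G k).card ≤
          ((Icc 1 m).filter fun k => x ∈ G k).card + (Icc (m+1) J).card := by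
        calc ((Icc 1 J).filter fun k => x ∈ G k).card
            ≤ (((Icc 1 m).filter fun k => x ∈ G k) ∪ (Icc (m+1) J)).card := by
              apply card_le_card
              intro k hk
              rw [mem_filter, mem_Icc] at hk
              rw [mem_union, mem_filter, mem_Icc, mem_Icc]
              by_cases h : k ≤ m
              · exact Or.inl ⟨⟨hk.1.1, h⟩, hk.2⟩
              · exact Or.inr ⟨by omega, hk.1.2⟩
          _ ≤ _ := card_union_le _ _
      have h1 : ((Icc 1 m).filter fun k => x ∈ G k) = ((Icc 1 m).filter fun k => x ∈ S k) := by
        apply filter_congr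
        intro k hk
        simp only [mem_Icc] at hk
        rw [hGmem]
        constructor
        · rintro (h | h)
          · exact h
          · exfalso
            rw [hTmem] at h
            have := amono x hk.2 (m := k)
            omega
        · exact fun h => Or.inl h
      have h2 : (Icc (m+1) J).card = J - m := by
        rw [Nat.card_Icc]; omega
      rw [h1, h2] at hsplit
      omega
    · intro hf
      have hsub : (((Icc 1 m).filter fun k => x ∈ S k) ∪ (Icc (m+1) J)) ⊆
          ((Icc 1 J).filter fun k => x ∈ G k) := by
        intro k hk
        rw [mem_union, mem_filter, mem_Icc, mem_Icc] at hk
        rw [mem_filter, mem_Icc]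
        rcases hk with ⟨⟨hk1, hk2⟩, hks⟩ | ⟨hk1, hk2⟩
        · exact ⟨⟨hk1, by omega⟩, (hGmem x k).mpr (Or.inl hks)⟩
        · refine ⟨⟨by omega, hk2⟩, (hGmem x k).mpr (Or.inr ?_)⟩
          rw [hTmem]
          refine ⟨by omega, le_trans hf (amono x (by omega))⟩
      have hdisj : Disjoint ((Icc 1 m).filter fun k => x ∈ S k) (Icc (m+1) J) := by
        rw [disjoint_left]
        intro k hk1 hk2
        rw [mem_filter, mem_Icc] at hk1
        rw [mem_Icc] at hk2
        omega
      have := card_le_card hsub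
      rw [card_union_of_disjoint hdisj, Nat.card_Icc] at this
      omega
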